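/- For every linear form L ∈ ℂ[x₀, x₁, x₂, x₃]₁ and every homogeneous cubic form F ∈ ℂ[x₀, x₁, x₂, x₃]₃, the quartic L·F satisfies dim H_{∂²(L·F)} ≤ 9; equivalently, the 10×10 middle catalecticant matrix of L·F (the matrix of the linear map sending degree-2 differential operators to the corresponding second-order partial derivatives of L·F) has vanishing determinant. -/

import Mathlib

open MvPolynomial

/-- Iterated partial derivative of a polynomial along a list of variables. -/
noncomputable def derivList {σ : Type*} (l : List σ) (F : MvPolynomial σ ℂ) :
    MvPolynomial σ ℂ :=
  l.foldl (fun G i => MvPolynomial.pderiv i G) F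

/-- `Hspan s F` is the linear span of all `s`-th order partial derivatives of `F`. -/
noncomputable def Hspan {σ : Type*} (s : ℕ) (F : MvPolynomial σ ℂ) :
    Submodule ℂ (MvPolynomial σ ℂ) :=
  Submodule.span ℂ {P | ∃ l : List σ, l.length = s ∧ P = derivList l F}

/-!
Write `∂ᵢ` for `pderiv i`. Since `∂ᵢL` is a constant for a linear form `L`, Leibniz' rule
gives `∂ⱼ∂ᵢ(L·F) = ∂ᵢL·∂ⱼF + ∂ⱼL·∂ᵢF + L·∂ⱼ∂ᵢF`, so `H_{∂²(L·F)} ⊆ H_{∂F} + L·H_{∂²F}`.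
For a cubic `F` in four variables both `H_{∂F}` and `H_{∂²F}` (a space of linear forms) have
dimension at most `4`, hence `dim H_{∂²(L·F)} ≤ 8`.
-/

namespace MvPolynomial

variable {σ R : Type*} [CommSemiring R]

theorem IsHomogeneous.exists_pderiv_eq_C {L : MvPolynomial σ R} (hL : L.IsHomogeneous 1)
    (i : σ) : ∃ a, pderiv i L = C a :=
  ⟨_, totalDegree_eq_zero_iff_eq_C.mp ((totalDegree_zero_iff_isHomogeneous σ).2 hL.pderiv)⟩

theorem IsHomogeneous.pderiv_pderiv_mul {L : MvPolynomial σ R} (hL : L.IsHomogeneous 1)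
    (F : MvPolynomial σ R) (i j : σ) :
    pderiv j (pderiv i (L * F)) =
      pderiv i L * pderiv j F + pderiv j L * pderiv i F + L * pderiv j (pderiv i F) := by
  obtain ⟨a, ha⟩ := hL.exists_pderiv_eq_C i
  rw [pderiv_mul, map_add, pderiv_mul, pderiv_mul, ha, pderiv_C]
  ring

end MvPolynomial

section Hspan

variable {σ : Type*}

theorem derivList_cons (i : σ) (l : List σ) (F : MvPolynomial σ ℂ) :
    derivList (i :: l) F = derivList l (pderiv i F) :=
  rfl

theorem MvPolynomial.IsHomogeneous.derivList {F : MvPolynomial σ ℂ} {n : ℕ}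
    (hF : F.IsHomogeneous n) (l : List σ) :
    (_root_.derivList l F).IsHomogeneous (n - l.length) := by
  induction l generalizing F n with
  | nil => exact hF
  | cons i l ih =>
    rw [derivList_cons, List.length_cons, Nat.sub_add_eq, Nat.sub_right_comm]
    exact ih hF.pderiv

theorem Hspan_le_homogeneousSubmodule {F : MvPolynomial σ ℂ} {n : ℕ} (hF : F.IsHomogeneous n)
    (s : ℕ) : Hspan s F ≤ homogeneousSubmodule σ ℂ (n - s) := by
  rw [Hspan, Submodule.span_le]
  rintro _ ⟨l, rfl, rfl⟩
  exact hF.derivList l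

theorem Hspan_one_eq_span_range_pderiv (F : MvPolynomial σ ℂ) :
    Hspan 1 F = Submodule.span ℂ (Set.range fun i => pderiv i F) := by
  refine congrArg _ (Set.ext fun P => ⟨?_, ?_⟩)
  · rintro ⟨l, hl, rfl⟩
    obtain ⟨i, rfl⟩ := List.length_eq_one_iff.mp hl
    exact ⟨i, rfl⟩
  · rintro ⟨i, rfl⟩
    exact ⟨[i], rfl, rfl⟩

theorem Hspan_two_mul_le {L : MvPolynomial σ ℂ} (hL : L.IsHomogeneous 1)
    (F : MvPolynomial σ ℂ) :
    Hspan 2 (L * F) ≤ Hspan 1 F ⊔ (Hspan 2 F).map (LinearMap.mulLeft ℂ L) := by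
  have h_first (i j : σ) : pderiv i L * pderiv j F ∈ Hspan 1 F := by
    obtain ⟨a, ha⟩ := hL.exists_pderiv_eq_C i
    rw [ha, C_mul']
    exact Submodule.smul_mem _ a (Submodule.subset_span ⟨[j], rfl, rfl⟩)
  rw [Hspan, Submodule.span_le]
  rintro _ ⟨l, hl, rfl⟩
  obtain ⟨i, j, rfl⟩ := List.length_eq_two.mp hl
  change pderiv j (pderiv i (L * F)) ∈ _
  rw [hL.pderiv_pderiv_mul]
  refine add_mem (add_mem ?_ ?_) ?_
  · exact Submodule.mem_sup_left (h_first i j)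
  · exact Submodule.mem_sup_left (h_first j i)
  · exact Submodule.mem_sup_right ⟨_, Submodule.subset_span ⟨[i, j], rfl, rfl⟩, rfl⟩

end Hspan

/-- For every linear form `L` and cubic form `F` in
`ℂ[x₀,x₁,x₂,x₃]`, the quartic `L·F` satisfies `dim H_{∂²(L·F)} ≤ 9`, i.e. its 10×10
middle catalecticant matrix is singular. -/
theorem osculating_in_secant_n3 (L F : MvPolynomial (Fin 4) ℂ)
    (hL : L.IsHomogeneous 1) (hF : F.IsHomogeneous 3) :
    Module.finrank ℂ (Hspan 2 (L * F)) ≤ 9 := by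
  set partials := Submodule.span ℂ (Set.range fun i => pderiv i F)
  set linearForms := Submodule.span ℂ (Set.range (X : Fin 4 → MvPolynomial (Fin 4) ℂ))
  have : FiniteDimensional ℂ partials := .span_of_finite ℂ (Set.finite_range _)
  have : FiniteDimensional ℂ linearForms := .span_of_finite ℂ (Set.finite_range _)
  have h_le : Hspan 2 (L * F) ≤ partials ⊔ linearForms.map (LinearMap.mulLeft ℂ L) := by
    refine (Hspan_two_mul_le hL F).trans (sup_le_sup (Hspan_one_eq_span_range_pderiv F).le ?_)
    refine Submodule.map_mono ?_
    simpa [linearForms, homogeneousSubmodule_one_eq_span_X] using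
      Hspan_le_homogeneousSubmodule hF 2
  calc Module.finrank ℂ (Hspan 2 (L * F))
      ≤ Module.finrank ℂ ↥(partials ⊔ linearForms.map (LinearMap.mulLeft ℂ L)) :=
        Submodule.finrank_mono h_le
    _ ≤ Module.finrank ℂ partials +
          Module.finrank ℂ (linearForms.map (LinearMap.mulLeft ℂ L)) :=
        Submodule.finrank_add_le_finrank_add_finrank _ _
    _ ≤ 4 + 4 := add_le_add (finrank_range_le_card _)
        ((Submodule.finrank_map_le _ _).trans (finrank_range_le_card _))
    _ ≤ 9 := by norm_num
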